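/- arXiv:1710.10897 — 2 statements merged into one kernel-verified Lean document; each statement's English description precedes it below -/
import Mathlib

section
/- If G is a topological groupoid and the range map r is an open map, then the multiplication map G⁽²⁾ → G, (α,β) ↦ αβ, is an open map; that is, for all open sets U, V ⊆ G the set UV = {αβ : α ∈ U, β ∈ V, (α,β) ∈ G⁽²⁾} is open in G. In particular, multiplication is open in every étale groupoid. -/
/-- A groupoid in the sense of Renault/Hahn: a set `G` with a set of composable
pairs (encoded by the relation `Comp`), a multiplication defined on composable pairs
(encoded by a total function `mul` whose values on non-composable pairs are irrelevant),
and an inversion `inv`. -/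
structure RGroupoid (G : Type*) where
  /-- `Comp α β` means `(α, β) ∈ G⁽²⁾`. -/
  Comp : G → G → Prop
  /-- the multiplication map -/
  mul : G → G → G
  /-- the inversion map -/
  inv : G → G
  inv_inv : ∀ γ, inv (inv γ) = γ
  comp_mul_left : ∀ {α β γ}, Comp α β → Comp β γ → Comp (mul α β) γ
  comp_mul_right : ∀ {α β γ}, Comp α β → Comp β γ → Comp α (mul β γ)
  mul_assoc : ∀ {α β γ}, Comp α β → Comp β γ → mul (mul α β) γ = mul α (mul β γ)
  comp_inv : ∀ γ, Comp γ (inv γ)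
  inv_mul_cancel : ∀ {γ η}, Comp γ η → mul (inv γ) (mul γ η) = η
  mul_inv_cancel : ∀ {γ η}, Comp γ η → mul (mul γ η) (inv η) = γ

namespace RGroupoid

variable {G : Type*} (S : RGroupoid G)

/-- The range map `r(γ) = γγ⁻¹`. -/
def r (γ : G) : G := S.mul γ (S.inv γ)

/-- The source map `s(γ) = γ⁻¹γ`. -/
def s (γ : G) : G := S.mul (S.inv γ) γ

/-- The unit space `G⁽⁰⁾ = {γ⁻¹γ : γ ∈ G}`. -/
def units : Set G := {x | ∃ γ, S.s γ = x}

end RGroupoid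

/-- A topological groupoid: a groupoid with a locally compact topology for which the unit
space is Hausdorff in the relative topology, `r`, `s` and inversion are continuous, and
multiplication is continuous on the set of composable pairs with the relative topology. -/
structure IsTopGroupoid {G : Type*} [TopologicalSpace G] (S : RGroupoid G) : Prop where
  locallyCompact : LocallyCompactSpace G
  t2_units : T2Space S.units
  continuous_r : Continuous S.r
  continuous_s : Continuous S.s
  continuous_inv : Continuous S.inv
  continuous_mul : Continuous fun p : {p : G × G // S.Comp p.1 p.2} => S.mul p.1.1 p.1.2

/-- An étale groupoid: a topological groupoid in which the range map `r : G → G` is a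
local homeomorphism. -/
structure IsEtaleGroupoid {G : Type*} [TopologicalSpace G] (S : RGroupoid G)
    extends IsTopGroupoid S : Prop where
  isLocalHomeomorph_r : IsLocalHomeomorph S.r

namespace RGroupoid

/-- `UV = {αβ : α ∈ U, β ∈ V, (α,β) ∈ G⁽²⁾}`. -/
def mulSet {G : Type*} (S : RGroupoid G) (U V : Set G) : Set G :=
  {g | ∃ α ∈ U, ∃ β ∈ V, S.Comp α β ∧ S.mul α β = g}

end RGroupoid

/-- A subset `B` of an étale groupoid is a bisection if it is contained in an open set `U`
on which `r` and `s` restrict to homeomorphisms onto open subsets of the unit space. -/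
def IsBisection {G : Type*} [TopologicalSpace G] (S : RGroupoid G) (B : Set G) : Prop :=
  ∃ U : Set G, B ⊆ U ∧ IsOpen U ∧ IsOpen (S.r '' U) ∧ IsOpen (S.s '' U) ∧
    IsHomeomorph (fun x : U => (⟨S.r x, Set.mem_image_of_mem S.r x.2⟩ : S.r '' U)) ∧
    IsHomeomorph (fun x : U => (⟨S.s x, Set.mem_image_of_mem S.s x.2⟩ : S.s '' U))

namespace RGroupoid

variable {G : Type*} (S : RGroupoid G)

lemma comp_inv' (γ : G) : S.Comp (S.inv γ) γ := by
  have := S.comp_inv (S.inv γ); rwa [S.inv_inv] at this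

lemma s_inv (γ : G) : S.s (S.inv γ) = S.r γ := by
  unfold s r; rw [S.inv_inv]

lemma s_eq_r_of_comp {γ η : G} (h : S.Comp γ η) : S.s γ = S.r η := by
  have h1 := S.comp_inv' γ
  have h2 : S.Comp (S.mul (S.inv γ) γ) η := S.comp_mul_left h1 h
  have h3 : S.mul (S.mul (S.inv γ) γ) η = η := by
    rw [S.mul_assoc h1 h, S.inv_mul_cancel h]
  have h4 := S.mul_inv_cancel h2
  rw [h3] at h4
  exact h4.symm

lemma comp_of_s_eq_r {α β : G} (h : S.s α = S.r β) : S.Comp α β := by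
  have hab : S.Comp α (S.mul (S.inv α) α) := S.comp_mul_right (S.comp_inv α) (S.comp_inv' α)
  have hab' : S.Comp α (S.mul β (S.inv β)) := by
    have e : S.mul (S.inv α) α = S.mul β (S.inv β) := h
    rwa [e] at hab
  have h2 : S.Comp (S.mul β (S.inv β)) β := S.comp_mul_left (S.comp_inv β) (S.comp_inv' β)
  have h3 : S.Comp α (S.mul (S.mul β (S.inv β)) β) := S.comp_mul_right hab' h2
  have h4 : S.mul (S.mul β (S.inv β)) β = β := by
    rw [S.mul_assoc (S.comp_inv β) (S.comp_inv' β)]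
    have := S.inv_mul_cancel (S.comp_inv' β)
    rwa [S.inv_inv] at this
  rwa [h4] at h3

/-- If the range map is open, then so is the product of two open sets. -/
lemma mulSet_open_of_r_open {G : Type*} [TopologicalSpace G] (S : RGroupoid G)
    (hS : IsTopGroupoid S) (hro : IsOpenMap S.r)
    (U V : Set G) (hU : IsOpen U) (hV : IsOpen V) : IsOpen (S.mulSet U V) := by
  -- the "left translation" map on pairs (α, γ) with (α⁻¹, γ) composable
  set W : Set (G × G) := {p | S.Comp (S.inv p.1) p.2} with hW
  have hf : Continuous (fun p : W => S.mul (S.inv p.1.1) p.1.2) := by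
    have hg : Continuous (fun p : W =>
        (⟨(S.inv p.1.1, p.1.2), p.2⟩ : {p : G × G // S.Comp p.1 p.2})) := by
      apply Continuous.subtype_mk
      exact ((hS.continuous_inv.comp (continuous_fst.comp continuous_subtype_val)).prodMk
        (continuous_snd.comp continuous_subtype_val))
    exact hS.continuous_mul.comp hg
  rw [isOpen_iff_forall_mem_open]
  rintro γ₀ ⟨α₀, hα₀U, β₀, hβ₀V, hc, heq⟩
  -- (α₀, γ₀) ∈ W
  have hc0 : S.Comp (S.inv α₀) γ₀ := by
    rw [← heq]; exact S.comp_mul_right (S.comp_inv' α₀) hc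
  -- the preimage of V under f is open in W
  have hpre : IsOpen ((fun p : W => S.mul (S.inv p.1.1) p.1.2) ⁻¹' V) :=
    hf.isOpen_preimage V hV
  rw [isOpen_induced_iff] at hpre
  obtain ⟨O, hO, hOeq⟩ := hpre
  have hx0 : (⟨(α₀, γ₀), hc0⟩ : W) ∈
      (fun p : W => S.mul (S.inv p.1.1) p.1.2) ⁻¹' V := by
    have : S.mul (S.inv α₀) γ₀ = β₀ := by rw [← heq]; exact S.inv_mul_cancel hc
    simpa [this] using hβ₀V
  have hx0O : (α₀, γ₀) ∈ O := by rw [← hOeq] at hx0; exact hx0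
  obtain ⟨O₁, O₂, hO₁, hO₂, hα₀O₁, hγ₀O₂, hprod⟩ := isOpen_prod_iff.mp hO α₀ γ₀ hx0O
  refine ⟨O₂ ∩ S.r ⁻¹' (S.r '' (O₁ ∩ U)), ?_, ?_, ?_⟩
  · rintro γ ⟨hγO₂, α, ⟨hαO₁, hαU⟩, hrα⟩
    have hcomp : S.Comp (S.inv α) γ := by
      apply S.comp_of_s_eq_r
      rw [S.s_inv, hrα]
    have hmemO : (α, γ) ∈ O := hprod ⟨hαO₁, hγO₂⟩
    have hβV : S.mul (S.inv α) γ ∈ V := by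
      have : (⟨(α, γ), hcomp⟩ : W) ∈ Subtype.val ⁻¹' O := hmemO
      rw [hOeq] at this
      exact this
    refine ⟨α, hαU, S.mul (S.inv α) γ, hβV, ?_, ?_⟩
    · exact S.comp_mul_right (S.comp_inv α) hcomp
    · have := S.inv_mul_cancel hcomp
      rwa [S.inv_inv] at this
  · exact hO₂.inter ((hS.continuous_r).isOpen_preimage _ (hro _ (hO₁.inter hU)))
  · refine ⟨hγ₀O₂, α₀, ⟨hα₀O₁, hα₀U⟩, ?_⟩
    have := S.s_eq_r_of_comp hc0
    rwa [S.s_inv] at this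

end RGroupoid

/-- If G is a topological groupoid whose range map is open, then multiplication is an
open map: for open U, V the set UV is open. In particular this holds whenever G is
étale. -/
theorem mul_open_of_r_open {G : Type*} [TopologicalSpace G] (S : RGroupoid G)
    (hS : IsTopGroupoid S) :
    (IsOpenMap S.r →
      ∀ U V : Set G, IsOpen U → IsOpen V → IsOpen (S.mulSet U V)) ∧
    (IsEtaleGroupoid S →
      ∀ U V : Set G, IsOpen U → IsOpen V → IsOpen (S.mulSet U V)) := by
  constructor
  · intro hro U V hU hV
    exact S.mulSet_open_of_r_open hS hro U V hU hV
  · intro hE U V hU hV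
    exact S.mulSet_open_of_r_open hS hE.isLocalHomeomorph_r.isOpenMap U V hU hV
end

section
/- Let G be an étale groupoid, and suppose γ ∈ G satisfies r(γ) ≠ s(γ) and U is a bisection containing γ. Then there is an open neighbourhood V of s(γ) in G⁽⁰⁾ such that r(UV) ∩ V = ∅, where UV = {αβ : α ∈ U, β ∈ V, (α,β) ∈ G⁽²⁾}. -/
namespace RGroupoid
variable {G : Type*} (S : RGroupoid G)

lemma r_inv (γ : G) : S.r (S.inv γ) = S.s γ := by
  unfold r s; rw [S.inv_inv]

variable {S} in
lemma inv_mul {α β : G} (h : S.Comp α β) :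
    S.inv (S.mul α β) = S.mul (S.inv β) (S.inv α) ∧ S.Comp (S.inv β) (S.inv α) := by
  set m := S.mul α β with hm
  have h1 : S.Comp m (S.inv β) := S.comp_mul_left h (S.comp_inv β)
  have h2 : S.mul m (S.inv β) = α := S.mul_inv_cancel h
  have h4 : S.Comp (S.inv m) α := by
    have := S.comp_mul_right (S.comp_inv' m) h1; rwa [h2] at this
  have h5 : S.mul (S.inv m) α = S.inv β := by
    have := S.inv_mul_cancel h1; rwa [h2] at this
  have h6 : S.Comp (S.inv β) (S.inv α) := by
    have := S.comp_mul_left h4 (S.comp_inv α); rwa [h5] at this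
  have h7 : S.mul (S.inv β) (S.inv α) = S.inv m := by
    have := S.mul_inv_cancel h4; rwa [h5] at this
  exact ⟨h7.symm, h6⟩

variable {S} in
lemma r_mul {α β : G} (h : S.Comp α β) : S.r (S.mul α β) = S.r α := by
  obtain ⟨hi, hc⟩ := inv_mul h
  have h1 : S.Comp (S.mul α β) (S.inv β) := S.comp_mul_left h (S.comp_inv β)
  have h2 : S.mul (S.mul α β) (S.inv β) = α := S.mul_inv_cancel h
  unfold r
  rw [hi, ← S.mul_assoc h1 hc, h2]

lemma r_s (δ : G) : S.r (S.s δ) = S.s δ := by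
  have := r_mul (S.comp_inv' δ)
  rw [S.r_inv] at this
  exact this

variable {S} in
lemma unit_eq_s {α β : G} (h : S.Comp α β) (hβ : β ∈ S.units) : β = S.s α := by
  obtain ⟨δ, hδ⟩ := hβ
  have hsa : S.Comp (S.s α) β := S.comp_mul_left (S.comp_inv' α) h
  have h2 : S.mul (S.s α) β = β := by
    have := S.mul_assoc (S.comp_inv' α) h
    rw [show S.mul (S.inv α) α = S.s α from rfl] at this
    rw [this, S.inv_mul_cancel h]
  have h3 : S.mul β (S.inv β) = S.s α := by
    have := S.mul_inv_cancel hsa; rwa [h2] at this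
  have : S.r β = S.s α := h3
  rw [← this, ← hδ, S.r_s]

lemma r_mem_units (g : G) : S.r g ∈ S.units :=
  ⟨S.inv g, by unfold s r; rw [S.inv_inv]⟩

end RGroupoid

/-- If γ is an element of an étale groupoid with r(γ) ≠ s(γ) and U is a bisection
containing γ, then there is an open neighbourhood V of s(γ) in the unit space such that
r(UV) ∩ V = ∅. -/
theorem separation_of_nontrivial_arrow {G : Type*} [TopologicalSpace G] (S : RGroupoid G)
    (hS : IsEtaleGroupoid S) (γ : G) (h : S.r γ ≠ S.s γ)
    (U : Set G) (hU : IsBisection S U) (hγU : γ ∈ U) :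
    ∃ V : Set G, IsOpen V ∧ V ⊆ S.units ∧ S.s γ ∈ V ∧
      S.r '' S.mulSet U V ∩ V = ∅ := by
  obtain ⟨W, hUW, hWo, hrWo, hsWo, hrh, hsh⟩ := hU
  set e := hsh.homeomorph _ with he
  set ψ : S.s '' W → G := fun x => S.r ((e.symm x : W) : G) with hψ
  have hψcont : Continuous ψ :=
    hS.continuous_r.comp (continuous_subtype_val.comp e.symm.continuous)
  have hsWu : S.s '' W ⊆ S.units := by
    rintro x ⟨α, -, rfl⟩; exact ⟨α, rfl⟩
  have hrγu : S.r γ ∈ S.units := S.r_mem_units γ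
  have hsγu : S.s γ ∈ S.units := ⟨γ, rfl⟩
  have hne : (⟨S.r γ, hrγu⟩ : S.units) ≠ ⟨S.s γ, hsγu⟩ := by
    simpa [Subtype.ext_iff] using h
  haveI := hS.t2_units
  obtain ⟨A, B, hA, hB, haA, hbB, hAB⟩ := t2_separation hne
  obtain ⟨A', hA', hA'eq⟩ := isOpen_induced_iff.mp hA
  obtain ⟨B', hB', hB'eq⟩ := isOpen_induced_iff.mp hB
  have hγW : γ ∈ W := hUW hγU
  have hsγW : S.s γ ∈ S.s '' W := ⟨γ, hγW, rfl⟩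
  have hsymm : ∀ (α : G) (hα : α ∈ W) (x : S.s '' W), S.s α = (x : G) →
      e.symm x = ⟨α, hα⟩ := by
    intro α hα x hx
    have hx' : e ⟨α, hα⟩ = x := by apply Subtype.ext; simp [he, ← hx]
    rw [← hx', Homeomorph.symm_apply_apply]
  set O : Set G := Subtype.val '' (ψ ⁻¹' A') with hO
  have hOopen : IsOpen O := hsWo.isOpenMap_subtype_val _ (hA'.preimage hψcont)
  refine ⟨O ∩ B', hOopen.inter hB', ?_, ⟨?_, ?_⟩, ?_⟩
  · rintro x ⟨⟨z, -, rfl⟩, -⟩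
    exact hsWu z.2
  · refine ⟨⟨S.s γ, hsγW⟩, ?_, rfl⟩
    have : e.symm ⟨S.s γ, hsγW⟩ = ⟨γ, hγW⟩ := hsymm γ hγW _ rfl
    simp only [Set.mem_preimage, hψ, this]
    have : (⟨S.r γ, hrγu⟩ : S.units) ∈ Subtype.val ⁻¹' A' := hA'eq ▸ haA
    exact this
  · have : (⟨S.s γ, hsγu⟩ : S.units) ∈ Subtype.val ⁻¹' B' := hB'eq ▸ hbB
    exact this
  · ext y
    simp only [Set.mem_inter_iff, Set.mem_empty_iff_false, iff_false]
    rintro ⟨⟨g, ⟨α, hαU, β, ⟨hβO, hβB'⟩, hcomp, rfl⟩, rfl⟩, hyO, hyB'⟩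
    -- y = r (αβ) = r α ∈ A', and y ∈ B', y ∈ units: contradiction
    have hβu : β ∈ S.units := by
      obtain ⟨z, -, rfl⟩ := hβO
      exact hsWu z.2
    have hβsα : β = S.s α := RGroupoid.unit_eq_s hcomp hβu
    have hαW : α ∈ W := hUW hαU
    have hy : S.r (S.mul α β) = S.r α := RGroupoid.r_mul hcomp
    have hβsW : β ∈ S.s '' W := ⟨α, hαW, hβsα.symm⟩
    have hyA' : S.r (S.mul α β) ∈ A' := by
      obtain ⟨z, hzA, hzval⟩ := hβO
      have hz : e.symm z = ⟨α, hαW⟩ := hsymm α hαW z (by rw [hzval, hβsα])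
      have h2 : S.r ((e.symm z : W) : G) ∈ A' := hzA
      rw [hz] at h2
      rw [hy]; exact h2
    have hyu : S.r (S.mul α β) ∈ S.units := S.r_mem_units _
    have hmemA : (⟨S.r (S.mul α β), hyu⟩ : S.units) ∈ A := by
      rw [← hA'eq]; exact hyA'
    have hmemB : (⟨S.r (S.mul α β), hyu⟩ : S.units) ∈ B := by
      rw [← hB'eq]; exact hyB'
    exact Set.disjoint_left.mp hAB hmemA hmemB
end
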